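/- arXiv:1305.5312 — 6 statements merged into one kernel-verified Lean document; each statement's English description precedes it below -/
import Mathlib

section
/- Let X be a symmetric solution of the Riccati equation XF + FᵀX - X B R† Bᵀ X + Λ = 0, where Λ is symmetric positive semidefinite. Then ker X ⊆ ker Λ. -/
/-!
Evaluate the Riccati equation on both sides at `v ∈ ker X`. Every term other than `Λ` has `X` as
its first or last factor, so by symmetry of `X` its quadratic form vanishes at `v`; hence
`vᵀ Λ v = 0`, which forces `Λ v = 0` because `Λ` is positive semidefinite.
-/

open Matrix

/-- `Rp` satisfies the four Penrose conditions for `R`. -/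
def IsMoorePenrose {m : ℕ} (R Rp : Matrix (Fin m) (Fin m) ℝ) : Prop :=
  R * Rp * R = R ∧ Rp * R * Rp = Rp ∧ (R * Rp)ᵀ = R * Rp ∧ (Rp * R)ᵀ = Rp * R

namespace Matrix

variable {ι κ α : Type*} [Fintype ι] [Fintype κ] [NonUnitalSemiring α]

theorem dotProduct_mul_mulVec_eq_zero_of_vecMul_eq_zero {w : ι → α} {X : Matrix ι κ α}
    (hw : w ᵥ* X = 0) (A : Matrix κ ι α) (u : ι → α) : w ⬝ᵥ (X * A) *ᵥ u = 0 := by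
  rw [← mulVec_mulVec, dotProduct_mulVec, hw, zero_dotProduct]

theorem dotProduct_mul_mulVec_eq_zero_of_mulVec_eq_zero {u : ι → α} {X : Matrix κ ι α}
    (hu : X *ᵥ u = 0) (A : Matrix ι κ α) (w : ι → α) : w ⬝ᵥ (A * X) *ᵥ u = 0 := by
  rw [← mulVec_mulVec, hu, mulVec_zero, dotProduct_zero]

end Matrix

theorem kerX_subset_kerLambda_general {n m : ℕ}
    (F X Λ : Matrix (Fin n) (Fin n) ℝ) (B : Matrix (Fin n) (Fin m) ℝ)
    (Rp : Matrix (Fin m) (Fin m) ℝ)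
    (hΛ : Λ.PosSemidef) (hX : Xᵀ = X)
    (hric : X * F + Fᵀ * X - X * B * Rp * Bᵀ * X + Λ = 0) :
    ∀ v : Fin n → ℝ, X.mulVec v = 0 → Λ.mulVec v = 0 := by
  intro v hv
  have hvX : v ᵥ* X = 0 := by rw [← hX, vecMul_transpose, hv]
  have hquad : v ⬝ᵥ Λ *ᵥ v = 0 := by
    have h := congrArg (fun M => v ⬝ᵥ M *ᵥ v) hric
    simpa only [add_mulVec, sub_mulVec, dotProduct_add, dotProduct_sub, zero_mulVec,
      dotProduct_zero, dotProduct_mul_mulVec_eq_zero_of_vecMul_eq_zero hvX,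
      dotProduct_mul_mulVec_eq_zero_of_mulVec_eq_zero hv, sub_zero, zero_add] using h
  rw [← hΛ.dotProduct_mulVec_zero_iff]
  simpa only [star_trivial] using hquad

theorem kerX_subset_kerLambda {n m : ℕ}
    (F X Λ : Matrix (Fin n) (Fin n) ℝ) (B : Matrix (Fin n) (Fin m) ℝ)
    (R Rp : Matrix (Fin m) (Fin m) ℝ)
    (hR : R.PosSemidef) (hRp : IsMoorePenrose R Rp)
    (hΛ : Λ.PosSemidef) (hX : Xᵀ = X)
    (hric : X * F + Fᵀ * X - X * B * Rp * Bᵀ * X + Λ = 0) :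
    ∀ v : Fin n → ℝ, X.mulVec v = 0 → Λ.mulVec v = 0 :=
  kerX_subset_kerLambda_general F X Λ B Rp hΛ hX hric
end

section
/- Let X be a symmetric solution of XF + FᵀX - X B R† Bᵀ X + Λ = 0 with Λ symmetric positive semidefinite. Then ker X is invariant under F, i.e., F(ker X) ⊆ ker X. -/
open Matrix

/-!
For `v ∈ ker X`, every term of the Riccati equation applied to `v` that ends in `X` vanishes,
leaving `X F v = -Λ v`. Pairing with `v` and using the symmetry of `X` gives
`vᵀ Λ v = -vᵀ X F v = -(X v)ᵀ F v = 0`, so `Λ v = 0` because `Λ ⪰ 0`, and hence `X F v = 0`.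
-/

variable {ι 𝕜 : Type*} [Fintype ι]

theorem mulVec_mulVec_eq_neg_of_mulVec_eq_zero [CommRing 𝕜] {F X Λ Q : Matrix ι ι 𝕜}
    (hric : X * F + Fᵀ * X - Q * X + Λ = 0) {v : ι → 𝕜} (hv : X *ᵥ v = 0) :
    X *ᵥ (F *ᵥ v) = -(Λ *ᵥ v) := by
  have h := congrArg (· *ᵥ v) hric
  simp only [add_mulVec, sub_mulVec, ← mulVec_mulVec, hv, mulVec_zero, zero_mulVec,
    add_zero, sub_zero] at h
  exact eq_neg_of_add_eq_zero_left h

theorem dotProduct_mulVec_eq_zero_of_transpose_eq [CommSemiring 𝕜] {X : Matrix ι ι 𝕜}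
    (hX : Xᵀ = X) {v : ι → 𝕜} (hv : X *ᵥ v = 0) (w : ι → 𝕜) : v ⬝ᵥ X *ᵥ w = 0 := by
  rw [dotProduct_mulVec, ← mulVec_transpose, hX, hv, zero_dotProduct]

theorem kerX_F_invariant_general {n m : ℕ}
    (F X Λ : Matrix (Fin n) (Fin n) ℝ) (B : Matrix (Fin n) (Fin m) ℝ)
    (Rp : Matrix (Fin m) (Fin m) ℝ)
    (hΛ : Λ.PosSemidef) (hX : Xᵀ = X)
    (hric : X * F + Fᵀ * X - X * B * Rp * Bᵀ * X + Λ = 0) :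
    ∀ v : Fin n → ℝ, X.mulVec v = 0 → X.mulVec (F.mulVec v) = 0 := by
  intro v hv
  have hXF : X *ᵥ (F *ᵥ v) = -(Λ *ᵥ v) := mulVec_mulVec_eq_neg_of_mulVec_eq_zero hric hv
  have hΛv : Λ *ᵥ v = 0 := by
    refine (hΛ.dotProduct_mulVec_zero_iff v).mp ?_
    have h := dotProduct_mulVec_eq_zero_of_transpose_eq hX hv (F *ᵥ v)
    rwa [hXF, dotProduct_neg, neg_eq_zero, ← star_trivial v] at h
  rw [hXF, hΛv, neg_zero]

theorem kerX_F_invariant {n m : ℕ}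
    (F X Λ : Matrix (Fin n) (Fin n) ℝ) (B : Matrix (Fin n) (Fin m) ℝ)
    (R Rp : Matrix (Fin m) (Fin m) ℝ)
    (hR : R.PosSemidef) (hRp : IsMoorePenrose R Rp)
    (hΛ : Λ.PosSemidef) (hX : Xᵀ = X)
    (hric : X * F + Fᵀ * X - X * B * Rp * Bᵀ * X + Λ = 0) :
    ∀ v : Fin n → ℝ, X.mulVec v = 0 → X.mulVec (F.mulVec v) = 0 :=
  kerX_F_invariant_general F X Λ B Rp hΛ hX hric
end

section
/- Let X be a symmetric solution of XF + FᵀX - X B R† Bᵀ X + Λ = 0 with Λ ⪰ 0, and suppose im B₂ ⊆ ker X for a matrix B₂. Then the reachable subspace R(F, B₂) = im B₂ + F·im B₂ + ... + F^{n-1}·im B₂ satisfies X·R(F,B₂) = {0}. -/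
open Matrix

/-!
If `X * M = 0`, multiplying the Riccati equation by `M` on the right kills every term except
`X * F * M + Λ * M`; multiplying further by `Mᵀ` on the left kills `Mᵀ * X * F * M` as well, so
`Mᵀ * Λ * M = 0`, which forces `Λ * M = 0` because `Λ ⪰ 0`. Hence `X * (F * M) = 0`: the
matrices annihilated by `X` are stable under left multiplication by `F`, and induction on `i`
starting from `B₂` gives the theorem.
-/

open scoped ComplexOrder MatrixOrder in
theorem Matrix.PosSemidef.conjTranspose_mul_mul_eq_zero_iff {𝕜 ι κ : Type*} [RCLike 𝕜]
    [Fintype ι] {A : Matrix ι ι 𝕜} (hA : A.PosSemidef) {M : Matrix ι κ 𝕜} :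
    Mᴴ * A * M = 0 ↔ A * M = 0 := by
  classical
  obtain ⟨S, rfl⟩ := CStarAlgebra.nonneg_iff_eq_star_mul_self.mp hA.nonneg
  refine ⟨fun h ↦ ?_, fun h ↦ by rw [Matrix.mul_assoc, h, Matrix.mul_zero]⟩
  have hSM : S * M = 0 := by
    rw [← conjTranspose_mul_self_eq_zero, conjTranspose_mul, ← h, star_eq_conjTranspose]
    simp only [Matrix.mul_assoc]
  rw [Matrix.mul_assoc, hSM, Matrix.mul_zero]

theorem riccati_mul_mul_eq_zero_of_mul_eq_zero {ι κ μ : Type*} [Fintype ι] [Fintype μ]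
    {F X Λ : Matrix ι ι ℝ} {B : Matrix ι μ ℝ} {Rp : Matrix μ μ ℝ}
    (hΛ : Λ.PosSemidef) (hX : Xᵀ = X)
    (hric : X * F + Fᵀ * X - X * B * Rp * Bᵀ * X + Λ = 0)
    {M : Matrix ι κ ℝ} (hM : X * M = 0) :
    X * (F * M) = 0 := by
  have hMX : Mᵀ * X = 0 := by rw [← hX, ← transpose_mul, hM, transpose_zero]
  have hsum : X * (F * M) + Λ * M = 0 := by
    calc X * (F * M) + Λ * M = (X * F + Fᵀ * X - X * B * Rp * Bᵀ * X + Λ) * M := by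
          simp only [Matrix.add_mul, Matrix.sub_mul, Matrix.mul_assoc, hM, Matrix.mul_zero,
            add_zero, sub_zero]
      _ = 0 := by rw [hric, Matrix.zero_mul]
  have hΛM : Λ * M = 0 := by
    refine hΛ.conjTranspose_mul_mul_eq_zero_iff.mp ?_
    calc Mᴴ * Λ * M = -(Mᵀ * X * (F * M)) := by
          rw [conjTranspose_eq_transpose_of_trivial, Matrix.mul_assoc,
            eq_neg_of_add_eq_zero_right hsum, Matrix.mul_neg, Matrix.mul_assoc]
      _ = 0 := by rw [hMX, Matrix.zero_mul, neg_zero]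
  rwa [hΛM, add_zero] at hsum

theorem X_annihilates_reachable_subspace_general {n m k : ℕ}
    (F X Λ : Matrix (Fin n) (Fin n) ℝ) (B : Matrix (Fin n) (Fin m) ℝ)
    (B₂ : Matrix (Fin n) (Fin k) ℝ)
    (Rp : Matrix (Fin m) (Fin m) ℝ)
    (hΛ : Λ.PosSemidef) (hX : Xᵀ = X)
    (hric : X * F + Fᵀ * X - X * B * Rp * Bᵀ * X + Λ = 0)
    (hB₂ : X * B₂ = 0) :
    ∀ i < n, X * (F ^ i * B₂) = 0 := by
  rintro i -
  induction i with
  | zero => rwa [pow_zero, Matrix.one_mul]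
  | succ i ih =>
    rw [pow_succ', Matrix.mul_assoc]
    exact riccati_mul_mul_eq_zero_of_mul_eq_zero hΛ hX hric ih

theorem X_annihilates_reachable_subspace {n m k : ℕ}
    (F X Λ : Matrix (Fin n) (Fin n) ℝ) (B : Matrix (Fin n) (Fin m) ℝ)
    (B₂ : Matrix (Fin n) (Fin k) ℝ)
    (R Rp : Matrix (Fin m) (Fin m) ℝ)
    (hR : R.PosSemidef) (hRp : IsMoorePenrose R Rp)
    (hΛ : Λ.PosSemidef) (hX : Xᵀ = X)
    (hric : X * F + Fᵀ * X - X * B * Rp * Bᵀ * X + Λ = 0)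
    (hB₂ : X * B₂ = 0) :
    ∀ i < n, X * (F ^ i * B₂) = 0 :=
  X_annihilates_reachable_subspace_general F X Λ B B₂ Rp hΛ hX hric hB₂
end

section
/- Let X be a symmetric solution of XF + FᵀX - X B R† Bᵀ X + Λ = 0 with Λ ⪰ 0, and suppose im B₂ ⊆ ker X. Then Λ annihilates the reachable subspace: Λ·R(F,B₂) = {0}. -/
open Matrix

/-!
If `X * M = 0`, multiplying the Riccati equation by `M` on the right leaves
`X * F * M + Λ * M = 0`; multiplying further by `Mᴴ` on the left kills the first term, since
`Mᴴ * X = (X * M)ᴴ = 0`. So `Mᴴ * Λ * M = 0`, which forces `Λ * M = 0` as `Λ ⪰ 0`, and then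
`X * F * M = 0`. Thus `ker X` is `F`-invariant and contained in `ker Λ`, and it contains every
`F ^ i * B₂` by induction.
-/

open scoped ComplexOrder

open scoped MatrixOrder in
theorem Matrix.PosSemidef.mul_eq_zero_of_conjTranspose_mul_mul_eq_zero {𝕜 n l : Type*}
    [RCLike 𝕜] [Fintype n] {A : Matrix n n 𝕜} (hA : A.PosSemidef) {M : Matrix n l 𝕜}
    (h : Mᴴ * A * M = 0) : A * M = 0 := by
  classical
  obtain ⟨B, rfl⟩ := CStarAlgebra.nonneg_iff_eq_star_mul_self.mp hA.nonneg
  have hBM : B * M = 0 := by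
    rw [← conjTranspose_mul_self_eq_zero, conjTranspose_mul]
    simpa only [Matrix.mul_assoc, star_eq_conjTranspose] using h
  rw [Matrix.mul_assoc, hBM, Matrix.mul_zero]

section Riccati

variable {𝕜 n l : Type*} [RCLike 𝕜] [Fintype n] {F X Λ Q : Matrix n n 𝕜}

theorem mul_eq_zero_and_mul_mul_eq_zero_of_riccati (hX : Xᴴ = X)
    (hric : X * F + Fᴴ * X - X * Q * X + Λ = 0) (hΛ : Λ.PosSemidef)
    {M : Matrix n l 𝕜} (hM : X * M = 0) : Λ * M = 0 ∧ X * (F * M) = 0 := by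
  have hcol : X * (F * M) + Λ * M = 0 := by
    simpa only [Matrix.add_mul, Matrix.sub_mul, Matrix.mul_assoc, hM, Matrix.mul_zero,
      Matrix.zero_mul, add_zero, sub_zero] using congrArg (· * M) hric
  have hMX : Mᴴ * X = 0 := by rw [← hX, ← conjTranspose_mul, hM, conjTranspose_zero]
  have hΛM : Λ * M = 0 := by
    refine hΛ.mul_eq_zero_of_conjTranspose_mul_mul_eq_zero ?_
    simpa only [Matrix.mul_add, ← Matrix.mul_assoc, hMX, Matrix.zero_mul, zero_add,
      Matrix.mul_zero] using congrArg (Mᴴ * ·) hcol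
  exact ⟨hΛM, by simpa only [hΛM, add_zero] using hcol⟩

theorem mul_pow_mul_eq_zero_of_riccati [DecidableEq n] (hX : Xᴴ = X)
    (hric : X * F + Fᴴ * X - X * Q * X + Λ = 0) (hΛ : Λ.PosSemidef) {M : Matrix n l 𝕜}
    (hM : X * M = 0) (i : ℕ) : X * (F ^ i * M) = 0 := by
  induction i with
  | zero => rwa [pow_zero, Matrix.one_mul]
  | succ i ih =>
    rw [pow_succ', Matrix.mul_assoc]
    exact (mul_eq_zero_and_mul_mul_eq_zero_of_riccati hX hric hΛ ih).2

end Riccati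

theorem Lambda_annihilates_reachable_subspace_general {n m k : ℕ}
    (F X Λ : Matrix (Fin n) (Fin n) ℝ) (B : Matrix (Fin n) (Fin m) ℝ)
    (B₂ : Matrix (Fin n) (Fin k) ℝ)
    (Rp : Matrix (Fin m) (Fin m) ℝ)
    (hΛ : Λ.PosSemidef) (hX : Xᵀ = X)
    (hric : X * F + Fᵀ * X - X * B * Rp * Bᵀ * X + Λ = 0)
    (hB₂ : X * B₂ = 0) :
    ∀ i < n, Λ * (F ^ i * B₂) = 0 := by
  rw [← conjTranspose_eq_transpose_of_trivial] at hX
  have hric' : X * F + Fᴴ * X - X * (B * Rp * Bᵀ) * X + Λ = 0 := by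
    simpa only [conjTranspose_eq_transpose_of_trivial, Matrix.mul_assoc] using hric
  intro i _
  have hker : X * (F ^ i * B₂) = 0 := mul_pow_mul_eq_zero_of_riccati hX hric' hΛ hB₂ i
  exact (mul_eq_zero_and_mul_mul_eq_zero_of_riccati hX hric' hΛ hker).1

theorem Lambda_annihilates_reachable_subspace {n m k : ℕ}
    (F X Λ : Matrix (Fin n) (Fin n) ℝ) (B : Matrix (Fin n) (Fin m) ℝ)
    (B₂ : Matrix (Fin n) (Fin k) ℝ)
    (R Rp : Matrix (Fin m) (Fin m) ℝ)
    (hR : R.PosSemidef) (hRp : IsMoorePenrose R Rp)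
    (hΛ : Λ.PosSemidef) (hX : Xᵀ = X)
    (hric : X * F + Fᵀ * X - X * B * Rp * Bᵀ * X + Λ = 0)
    (hB₂ : X * B₂ = 0) :
    ∀ i < n, Λ * (F ^ i * B₂) = 0 :=
  Lambda_annihilates_reachable_subspace_general F X Λ B B₂ Rp hΛ hX hric hB₂
end

section
/- Let Π = [[Q,S],[Sᵀ,R]] be symmetric positive semidefinite and let P be a symmetric matrix with ker R ⊆ ker(PB + S). Then the matrix [[ (PB+S)R†(Sᵀ+BᵀP), PB+S ],[ Sᵀ+BᵀP, R ]] factors as N Nᵀ where N = [[ (PB+S)R†R^{1/2} ],[ R^{1/2} ]]; in particular this matrix is positive semidefinite. -/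
open Matrix

/-!
Write `A = PB + S`. The kernel condition says that `A` factors through `R`, namely
`A = A R† R`, and `P = Pᵀ` gives `Sᵀ + BᵀP = Aᵀ`. With `C = A R†` the matrix
`N = [C R^{1/2}; R^{1/2}]` has `N Nᵀ = [[C R Cᵀ, C R], [R Cᵀ, R]]`, and `C R = A`
turns this into the given block matrix. A Gram matrix is positive semidefinite.
-/

namespace Matrix

variable {α l m n : Type*} [CommRing α] [Fintype m]

theorem mul_mul_eq_self_of_ker_le_ker [DecidableEq m] {A : Matrix l m α}
    {R Rp : Matrix m m α} (hRp : R * Rp * R = R)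
    (hker : ∀ v : m → α, R *ᵥ v = 0 → A *ᵥ v = 0) :
    A * Rp * R = A := by
  refine ext_iff_mulVec.mpr fun v => ?_
  have hR : R *ᵥ ((Rp * R) *ᵥ v - v) = 0 := by
    rw [mulVec_sub, mulVec_mulVec, ← Matrix.mul_assoc, hRp, sub_self]
  rw [Matrix.mul_assoc, ← mulVec_mulVec, ← sub_eq_zero, ← mulVec_sub, hker _ hR]

theorem fromRows_mul_transpose_fromRows_of_mul_eq (C : Matrix n m α)
    {A : Matrix n m α} {R Rh : Matrix m m α} (hRh : Rh * Rhᵀ = R) (hA : C * R = A) :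
    fromRows (C * Rh) Rh * (fromRows (C * Rh) Rh)ᵀ = fromBlocks (C * Aᵀ) A Aᵀ R := by
  have hRT : Rᵀ = R := by rw [← hRh, transpose_mul, transpose_transpose]
  have hCRh : C * Rh * Rhᵀ = A := by rw [Matrix.mul_assoc, hRh, hA]
  have hRhC : Rh * (C * Rh)ᵀ = Aᵀ := by
    rw [← hCRh]; simp only [transpose_mul, transpose_transpose, Matrix.mul_assoc]
  rw [transpose_fromRows, fromRows_mul_fromCols, hRh, hCRh, hRhC, Matrix.mul_assoc, hRhC]

end Matrix

theorem completed_square_factorisation_general {n m : ℕ}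
    (P : Matrix (Fin n) (Fin n) ℝ) (B S : Matrix (Fin n) (Fin m) ℝ)
    (R Rp Rh : Matrix (Fin m) (Fin m) ℝ)
    (hRp : IsMoorePenrose R Rp)
    (hRh : Rh.PosSemidef ∧ Rh * Rh = R)
    (hP : Pᵀ = P)
    (hker : ∀ v : Fin m → ℝ, R.mulVec v = 0 → (P * B + S).mulVec v = 0) :
    Matrix.fromBlocks
        ((P * B + S) * Rp * (Sᵀ + Bᵀ * P)) (P * B + S)
        (Sᵀ + Bᵀ * P) R
      = Matrix.fromRows ((P * B + S) * Rp * Rh) Rh *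
          (Matrix.fromRows ((P * B + S) * Rp * Rh) Rh)ᵀ ∧
    (Matrix.fromBlocks
        ((P * B + S) * Rp * (Sᵀ + Bᵀ * P)) (P * B + S)
        (Sᵀ + Bᵀ * P) R).PosSemidef := by
  obtain ⟨hRh_psd, hRh_sq⟩ := hRh
  have hRhT : Rhᵀ = Rh := by
    rw [← conjTranspose_eq_transpose_of_trivial]; exact hRh_psd.isHermitian
  have hAT : (P * B + S)ᵀ = Sᵀ + Bᵀ * P := by
    rw [transpose_add, transpose_mul, hP, add_comm]
  have hA : (P * B + S) * Rp * R = P * B + S := mul_mul_eq_self_of_ker_le_ker hRp.1 hker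
  have hfact := fromRows_mul_transpose_fromRows_of_mul_eq ((P * B + S) * Rp)
    (by rw [hRhT, hRh_sq]) hA
  rw [hAT] at hfact
  refine ⟨hfact.symm, hfact ▸ ?_⟩
  simpa only [conjTranspose_eq_transpose_of_trivial] using
    posSemidef_self_mul_conjTranspose (fromRows ((P * B + S) * Rp * Rh) Rh)

theorem completed_square_factorisation {n m : ℕ}
    (Q P : Matrix (Fin n) (Fin n) ℝ) (B S : Matrix (Fin n) (Fin m) ℝ)
    (R Rp Rh : Matrix (Fin m) (Fin m) ℝ)
    (hR : R.PosSemidef)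
    (hRp : IsMoorePenrose R Rp)
    (hRh : Rh.PosSemidef ∧ Rh * Rh = R)
    (hP : Pᵀ = P)
    (hker : ∀ v : Fin m → ℝ, R.mulVec v = 0 → (P * B + S).mulVec v = 0) :
    Matrix.fromBlocks
        ((P * B + S) * Rp * (Sᵀ + Bᵀ * P)) (P * B + S)
        (Sᵀ + Bᵀ * P) R
      = Matrix.fromRows ((P * B + S) * Rp * Rh) Rh *
          (Matrix.fromRows ((P * B + S) * Rp * Rh) Rh)ᵀ ∧
    (Matrix.fromBlocks
        ((P * B + S) * Rp * (Sᵀ + Bᵀ * P)) (P * B + S)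
        (Sᵀ + Bᵀ * P) R).PosSemidef :=
  completed_square_factorisation_general P B S R Rp Rh hRp hRh hP hker
end

section
/- Let X be a symmetric solution of the CGCARE (with constraint ker R ⊆ ker(XB), given ker R ⊆ ker S). Set A₀ = A - BR†Sᵀ and Q₀ = Q - SR†Sᵀ ⪰ 0. Then ker X ⊆ ker Q₀ and ker X is A₀-invariant; consequently the reachable subspace R(A₀, BG) of the pair (A₀, BG), with G = I - R†R, satisfies R(A₀, BG) ⊆ ker X ⊆ ker Q₀. -/
/-!
Testing `Π ⪰ 0` against vectors `(0, v)` gives `ker R ⊆ ker S`, so `S R† R = S`, and the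
congruence of `Π` by `[I, -S R†]` is then exactly `Q₀`, which is therefore `⪰ 0`. For `v ∈ ker X`
the Riccati equation applied to `v` collapses to `X A₀ v + Q₀ v = 0`; pairing with `v` and using
`X = Xᵀ` gives `vᵀ Q₀ v = 0`, hence `Q₀ v = 0` and then `X A₀ v = 0`. So `ker X` is an
`A₀`-invariant subspace of `ker Q₀`, and it contains `im (B G)` because `X B G = 0`.
-/

open Matrix

namespace Matrix

theorem mul_eq_zero_of_forall_mulVec {α : Type*} [Semiring α] {l m n o : Type*}
    [Fintype m] [Fintype n] {X : Matrix l m α} {Y : Matrix o m α} {M : Matrix m n α}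
    (h : ∀ v, X *ᵥ v = 0 → Y *ᵥ v = 0) (hM : X * M = 0) : Y * M = 0 :=
  ext_iff_mulVec.2 fun v => by
    rw [← mulVec_mulVec, h _ (by rw [mulVec_mulVec, hM, zero_mulVec]), zero_mulVec]

theorem mul_pow_mul_eq_zero {α : Type*} [Semiring α] {ι κ : Type*} [Fintype ι] [Fintype κ]
    [DecidableEq ι] {X A : Matrix ι ι α} {M : Matrix ι κ α}
    (hA : ∀ v, X *ᵥ v = 0 → X *ᵥ (A *ᵥ v) = 0) (hM : X * M = 0) (i : ℕ) :
    X * (A ^ i * M) = 0 := by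
  induction i with
  | zero => simpa using hM
  | succ i ih =>
    rw [pow_succ', Matrix.mul_assoc, ← Matrix.mul_assoc X]
    exact mul_eq_zero_of_forall_mulVec (Y := X * A) (fun v hv => mulVec_mulVec v X A ▸ hA v hv) ih

namespace PosSemidef

variable {ι κ : Type*} [Fintype ι] [Fintype κ] {Q : Matrix ι ι ℝ} {S : Matrix ι κ ℝ}
  {R : Matrix κ κ ℝ}

theorem fromBlocks₁₂_mulVec_eq_zero (hP : (fromBlocks Q S Sᵀ R).PosSemidef) {v : κ → ℝ}
    (hv : R *ᵥ v = 0) : S *ᵥ v = 0 := by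
  have hPv : fromBlocks Q S Sᵀ R *ᵥ Sum.elim 0 v = Sum.elim (S *ᵥ v) 0 := by
    simp [fromBlocks_mulVec, hv]
  have h := (hP.dotProduct_mulVec_zero_iff (Sum.elim 0 v)).1 (by simp [hPv])
  rw [hPv] at h
  exact funext fun i => by simpa using congrFun h (Sum.inl i)

theorem sub_mul_mul_transpose_of_fromBlocks [DecidableEq ι] {Rp : Matrix κ κ ℝ}
    (hP : (fromBlocks Q S Sᵀ R).PosSemidef) (hS : S * Rp * R = S) :
    (Q - S * Rp * Sᵀ).PosSemidef := by
  have h := hP.mul_mul_conjTranspose_same (fromCols 1 (-(S * Rp)))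
  rw [Matrix.mul_assoc] at hS
  simpa [transpose_fromCols, fromCols_mul_fromBlocks, fromCols_mul_fromRows, Matrix.mul_assoc, hS,
    sub_eq_add_neg] using h

end PosSemidef

end Matrix

section Riccati

variable {ι : Type*} [Fintype ι] {X A K Q : Matrix ι ι ℝ}

theorem mulVec_add_mulVec_eq_zero_of_riccati (hric : X * A + Aᵀ * X - X * K * X + Q = 0)
    {v : ι → ℝ} (hv : X *ᵥ v = 0) : X *ᵥ (A *ᵥ v) + Q *ᵥ v = 0 := by
  simpa [add_mulVec, sub_mulVec, ← mulVec_mulVec, hv] using congrArg (· *ᵥ v) hric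

theorem mulVec_eq_zero_of_riccati (hX : Xᵀ = X) (hQ : Q.PosSemidef)
    (hric : X * A + Aᵀ * X - X * K * X + Q = 0) {v : ι → ℝ} (hv : X *ᵥ v = 0) :
    Q *ᵥ v = 0 := by
  have hvX : v ᵥ* X = 0 := by rw [← hX, vecMul_transpose, hv]
  refine (hQ.dotProduct_mulVec_zero_iff v).1 ?_
  have h := congrArg (v ⬝ᵥ ·) (mulVec_add_mulVec_eq_zero_of_riccati hric hv)
  rwa [dotProduct_add, dotProduct_mulVec v X, hvX, zero_dotProduct, zero_add, dotProduct_zero] at h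

theorem mulVec_mulVec_eq_zero_of_riccati (hX : Xᵀ = X) (hQ : Q.PosSemidef)
    (hric : X * A + Aᵀ * X - X * K * X + Q = 0) {v : ι → ℝ} (hv : X *ᵥ v = 0) :
    X *ᵥ (A *ᵥ v) = 0 := by
  simpa [mulVec_eq_zero_of_riccati hX hQ hric hv] using
    mulVec_add_mulVec_eq_zero_of_riccati hric hv

end Riccati

theorem kerX_properties_and_reachable_general {n m : ℕ}
    (Q X : Matrix (Fin n) (Fin n) ℝ) (B S : Matrix (Fin n) (Fin m) ℝ)
    (R Rp : Matrix (Fin m) (Fin m) ℝ)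
    (A₀ Q₀ : Matrix (Fin n) (Fin n) ℝ) (G : Matrix (Fin m) (Fin m) ℝ)
    (hPi : (Matrix.fromBlocks Q S Sᵀ R).PosSemidef)
    (hRp : IsMoorePenrose R Rp)
    (hQ₀ : Q₀ = Q - S * Rp * Sᵀ)
    (hG : G = 1 - Rp * R)
    (hX : Xᵀ = X)
    (hric : X * A₀ + A₀ᵀ * X - X * B * Rp * Bᵀ * X + Q₀ = 0)
    (hXBG : X * B * G = 0) :
    (∀ v : Fin n → ℝ, X.mulVec v = 0 → Q₀.mulVec v = 0) ∧
    (∀ v : Fin n → ℝ, X.mulVec v = 0 → X.mulVec (A₀.mulVec v) = 0) ∧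
    (∀ i < n, X * (A₀ ^ i * (B * G)) = 0 ∧ Q₀ * (A₀ ^ i * (B * G)) = 0) := by
  have hRG : R * G = 0 := by
    rw [hG, Matrix.mul_sub, Matrix.mul_one, ← Matrix.mul_assoc, hRp.1, sub_self]
  have hSG : S * G = 0 :=
    mul_eq_zero_of_forall_mulVec (M := G) (fun _ => hPi.fromBlocks₁₂_mulVec_eq_zero) hRG
  have hSRpR : S * Rp * R = S := by
    rw [hG, Matrix.mul_sub, Matrix.mul_one, sub_eq_zero] at hSG
    rw [Matrix.mul_assoc, ← hSG]
  have hQ₀psd : Q₀.PosSemidef := hQ₀ ▸ hPi.sub_mul_mul_transpose_of_fromBlocks hSRpR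
  have hric' : X * A₀ + A₀ᵀ * X - X * (B * Rp * Bᵀ) * X + Q₀ = 0 := by
    simpa only [Matrix.mul_assoc] using hric
  have hkerQ₀ := fun v => mulVec_eq_zero_of_riccati (v := v) hX hQ₀psd hric'
  have hinvA₀ := fun v => mulVec_mulVec_eq_zero_of_riccati (v := v) hX hQ₀psd hric'
  refine ⟨hkerQ₀, hinvA₀, fun i _ => ?_⟩
  have hXM := mul_pow_mul_eq_zero (M := B * G) hinvA₀ (by rwa [← Matrix.mul_assoc]) i
  exact ⟨hXM, mul_eq_zero_of_forall_mulVec hkerQ₀ hXM⟩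

theorem kerX_properties_and_reachable {n m : ℕ}
    (A Q X : Matrix (Fin n) (Fin n) ℝ) (B S : Matrix (Fin n) (Fin m) ℝ)
    (R Rp : Matrix (Fin m) (Fin m) ℝ)
    (A₀ Q₀ : Matrix (Fin n) (Fin n) ℝ) (G : Matrix (Fin m) (Fin m) ℝ)
    (hPi : (Matrix.fromBlocks Q S Sᵀ R).PosSemidef)
    (hRp : IsMoorePenrose R Rp)
    (hA₀ : A₀ = A - B * Rp * Sᵀ) (hQ₀ : Q₀ = Q - S * Rp * Sᵀ)
    (hG : G = 1 - Rp * R)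
    (hX : Xᵀ = X)
    (hric : X * A₀ + A₀ᵀ * X - X * B * Rp * Bᵀ * X + Q₀ = 0)
    (hXBG : X * B * G = 0) :
    (∀ v : Fin n → ℝ, X.mulVec v = 0 → Q₀.mulVec v = 0) ∧
    (∀ v : Fin n → ℝ, X.mulVec v = 0 → X.mulVec (A₀.mulVec v) = 0) ∧
    (∀ i < n, X * (A₀ ^ i * (B * G)) = 0 ∧ Q₀ * (A₀ ^ i * (B * G)) = 0) :=
  kerX_properties_and_reachable_general Q X B S R Rp A₀ Q₀ G hPi hRp hQ₀ hG hX hric hXBG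
end
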